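/- There exist a field K, a valuation ν on K[x], and a monic polynomial q ∈ K[x] such that the q-truncation ν_q is not a valuation. Concretely: if ν(x) = ν(a) = 1 for some a ∈ K and q(x) = x² + 1, then ν_q(x² - a²) = 0 while ν_q(x-a) + ν_q(x+a) ≥ 2, so ν_q((x-a)(x+a)) ≠ ν_q(x-a) + ν_q(x+a). -/

import Mathlib

/-!
With `q = x² + 1` we have `x² - a² = q - (1 + a²)`, and both terms of this `q`-expansion have
value `0` because `ν(x²) = ν(a²) = 2 > 0`; hence `ν_q(x² - a²) = 0`. On the other hand `x ± a`
has degree below `deg q`, so it is its own `q`-expansion and `ν_q(x ± a) = ν(x ± a) ≥ 1`.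
-/

open Polynomial
open scoped Classical
noncomputable section

/-- `ν` is (the restriction to nonzero polynomials of) a valuation on `K[x]`,
nontrivial on `K`, with `ν(x) ≥ 0`.  Values are taken in a linearly ordered
field `Γ` (playing the role of the divisible hull of the value group). -/
structure IsVal {K : Type*} [Field K] {Γ : Type*} [Field Γ] [LinearOrder Γ] [IsStrictOrderedRing Γ]
    (ν : Polynomial K → Γ) : Prop where
  map_mul : ∀ f g : Polynomial K, f ≠ 0 → g ≠ 0 → ν (f * g) = ν f + ν g
  map_add : ∀ f g : Polynomial K, f ≠ 0 → g ≠ 0 → f + g ≠ 0 →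
    min (ν f) (ν g) ≤ ν (f + g)
  nontrivial : ∃ a : K, a ≠ 0 ∧ ν (C a) ≠ 0
  nonneg_x : 0 ≤ ν X

/-- `ε(f) = max_{b ≥ 1, ∂_b f ≠ 0} (ν(f) - ν(∂_b f))/b`, where `∂_b` is the
`b`-th formal (Hasse) derivative.  (Terms with `∂_b f = 0` correspond to the
value `-∞` and are omitted from the maximum.) -/
noncomputable def eps {K : Type*} [Field K] {Γ : Type*} [Field Γ] [LinearOrder Γ] [IsStrictOrderedRing Γ]
    (ν : Polynomial K → Γ) (f : Polynomial K) : Γ :=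
  if h : ((Finset.Icc 1 f.natDegree).filter
      fun b => Polynomial.hasseDeriv b f ≠ 0).Nonempty then
    ((Finset.Icc 1 f.natDegree).filter
      fun b => Polynomial.hasseDeriv b f ≠ 0).sup' h
      fun b => (ν f - ν (Polynomial.hasseDeriv b f)) / (b : Γ)
  else 0

/-- A monic (nonconstant) polynomial `Q` is a key polynomial for `ν` if every
`f ∈ K[x]` with `ε(f) ≥ ε(Q)` satisfies `deg f ≥ deg Q`. -/
def IsKeyPol {K : Type*} [Field K] {Γ : Type*} [Field Γ] [LinearOrder Γ] [IsStrictOrderedRing Γ]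
    (ν : Polynomial K → Γ) (Q : Polynomial K) : Prop :=
  Q.Monic ∧ 1 ≤ Q.natDegree ∧
    ∀ f : Polynomial K, 1 ≤ f.natDegree → eps ν Q ≤ eps ν f →
      Q.natDegree ≤ f.natDegree

/-- The `i`-th coefficient `f_i` of the `q`-standard expansion
`f = Σ f_i q^i` (each `f_i = 0` or `deg f_i < deg q`), for `q` monic. -/
noncomputable def qCoeff {K : Type*} [Field K] (q f : Polynomial K) (i : ℕ) :
    Polynomial K :=
  (f /ₘ q ^ i) %ₘ q

/-- The `q`-truncation `ν_q(f) = min_i ν(f_i q^i)` of `ν`, the minimum taken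
over the nonzero coefficients of the `q`-standard expansion of `f`. -/
noncomputable def truncVal {K : Type*} [Field K] {Γ : Type*}
    [Field Γ] [LinearOrder Γ] [IsStrictOrderedRing Γ] (ν : Polynomial K → Γ) (q f : Polynomial K) : Γ :=
  if h : ((Finset.range (f.natDegree + 1)).filter
      fun i => qCoeff q f i ≠ 0).Nonempty then
    ((Finset.range (f.natDegree + 1)).filter
      fun i => qCoeff q f i ≠ 0).inf' h
      fun i => ν (qCoeff q f i * q ^ i)
  else 0

/-- `I(Q) = {b : (ν(Q) - ν(∂_b Q))/b = ε(Q)}`. -/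
def Iset {K : Type*} [Field K] {Γ : Type*} [Field Γ] [LinearOrder Γ] [IsStrictOrderedRing Γ]
    (ν : Polynomial K → Γ) (Q : Polynomial K) : Set ℕ :=
  {b | 1 ≤ b ∧ Polynomial.hasseDeriv b Q ≠ 0 ∧
    (ν Q - ν (Polynomial.hasseDeriv b Q)) / (b : Γ) = eps ν Q}

/-- `S_Q(f) = {i : ν(f_i Q^i) = ν_Q(f)}` (over nonzero coefficients). -/
def Sset {K : Type*} [Field K] {Γ : Type*} [Field Γ] [LinearOrder Γ] [IsStrictOrderedRing Γ]
    (ν : Polynomial K → Γ) (q f : Polynomial K) : Set ℕ :=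
  {i | qCoeff q f i ≠ 0 ∧ ν (qCoeff q f i * q ^ i) = truncVal ν q f}


variable {K : Type*} [Field K] {Γ : Type*} [Field Γ] [LinearOrder Γ] [IsStrictOrderedRing Γ]

namespace IsVal

variable {ν : K[X] → Γ} {f g : K[X]}

theorem map_one (hν : IsVal ν) : ν 1 = 0 := by
  have h := hν.map_mul 1 1 one_ne_zero one_ne_zero
  rw [mul_one] at h
  linarith

theorem map_neg (hν : IsVal ν) (hf : f ≠ 0) : ν (-f) = ν f := by
  have hm1 : ν (-1) = 0 := by
    have h := hν.map_mul (-1) (-1) (neg_ne_zero.2 one_ne_zero) (neg_ne_zero.2 one_ne_zero)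
    rw [neg_mul_neg, one_mul, hν.map_one] at h
    linarith
  rw [← neg_one_mul, hν.map_mul _ _ (neg_ne_zero.2 one_ne_zero) hf, hm1, zero_add]

theorem map_pow (hν : IsVal ν) (hf : f ≠ 0) (n : ℕ) : ν (f ^ n) = n * ν f := by
  induction n with
  | zero => rw [pow_zero, hν.map_one, Nat.cast_zero, zero_mul]
  | succ n ih =>
    rw [pow_succ, hν.map_mul _ _ (pow_ne_zero n hf) hf, ih]
    push_cast
    ring

theorem add_ne_zero_of_ne (hν : IsVal ν) (hf : f ≠ 0) (hfg : ν f ≠ ν g) : f + g ≠ 0 := by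
  intro h
  rw [show g = -f by linear_combination h, hν.map_neg hf] at hfg
  exact hfg rfl

theorem min_le_map_sub (hν : IsVal ν) (hf : f ≠ 0) (hg : g ≠ 0) (hfg : f - g ≠ 0) :
    min (ν f) (ν g) ≤ ν (f - g) := by
  rw [sub_eq_add_neg] at hfg ⊢
  rw [← hν.map_neg hg]
  exact hν.map_add f (-g) hf (neg_ne_zero.2 hg) hfg

theorem map_add_of_lt (hν : IsVal ν) (hf : f ≠ 0) (hg : g ≠ 0) (hlt : ν f < ν g) :
    ν (f + g) = ν f := by
  have hfg := hν.add_ne_zero_of_ne hf hlt.ne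
  refine le_antisymm ?_ (min_eq_left hlt.le ▸ hν.map_add f g hf hg hfg)
  have h := hν.min_le_map_sub hfg hg (by rwa [add_sub_cancel_right])
  rw [add_sub_cancel_right, min_le_iff] at h
  exact h.resolve_right hlt.not_ge

theorem map_one_add_of_pos (hν : IsVal ν) (hf : f ≠ 0) (hpos : 0 < ν f) : ν (1 + f) = 0 := by
  rw [hν.map_add_of_lt one_ne_zero hf (hν.map_one ▸ hpos), hν.map_one]

end IsVal

section Truncation

variable {q f : K[X]}

theorem qCoeff_zero (q f : K[X]) : qCoeff q f 0 = f %ₘ q := by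
  rw [qCoeff, pow_zero, divByMonic_one]

theorem qCoeff_eq_zero_of_degree_lt (hq : q.Monic) {i : ℕ} (h : f.degree < (q ^ i).degree) :
    qCoeff q f i = 0 := by
  rw [qCoeff, (divByMonic_eq_zero_iff (hq.pow i)).2 h, zero_modByMonic]

theorem truncVal_eq_of_attained (ν : K[X] → Γ) {v : Γ} (i₀ : ℕ) (hi₀ : i₀ ≤ f.natDegree)
    (hne : qCoeff q f i₀ ≠ 0) (hv : ν (qCoeff q f i₀ * q ^ i₀) = v)
    (hle : ∀ i, qCoeff q f i ≠ 0 → v ≤ ν (qCoeff q f i * q ^ i)) :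
    truncVal ν q f = v := by
  have hmem : i₀ ∈ (Finset.range (f.natDegree + 1)).filter fun i => qCoeff q f i ≠ 0 :=
    Finset.mem_filter.2 ⟨Finset.mem_range.2 (Nat.lt_succ_of_le hi₀), hne⟩
  rw [truncVal, dif_pos ⟨i₀, hmem⟩]
  exact le_antisymm (hv ▸ Finset.inf'_le _ hmem)
    (Finset.le_inf' _ _ fun i hi => hle i (Finset.mem_filter.1 hi).2)

theorem truncVal_of_degree_lt (ν : K[X] → Γ) (hq : q.Monic) (hf : f ≠ 0)
    (hdeg : f.degree < q.degree) : truncVal ν q f = ν f := by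
  have h0 : qCoeff q f 0 = f := by rw [qCoeff_zero, (modByMonic_eq_self_iff hq).2 hdeg]
  refine truncVal_eq_of_attained ν 0 (Nat.zero_le _) (by rwa [h0]) (by rw [h0, pow_zero, mul_one]) ?_
  rintro (_ | i) hi
  · rw [h0, pow_zero, mul_one]
  · exact absurd (qCoeff_eq_zero_of_degree_lt hq (hdeg.trans_le
      (degree_le_of_dvd (dvd_pow_self q i.succ_ne_zero) (hq.pow _).ne_zero))) hi

theorem truncVal_add_of_degree_lt (ν : K[X] → Γ) (hq : q.Monic) (hq0 : 0 < q.degree) {c : K[X]}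
    (hc0 : c ≠ 0) (hc : c.degree < q.degree) : truncVal ν q (q + c) = min (ν c) (ν q) := by
  have hdm := div_modByMonic_unique (f := q + c) 1 c hq ⟨by ring, hc⟩
  have h0 : qCoeff q (q + c) 0 = c := by rw [qCoeff_zero, hdm.2]
  have h1 : qCoeff q (q + c) 1 = 1 := by
    rw [qCoeff, pow_one, hdm.1, (modByMonic_eq_self_iff hq).2 (by rwa [degree_one])]
  have hn : (q + c).natDegree = q.natDegree := natDegree_add_eq_left_of_degree_lt hc
  have hn0 : 0 < q.natDegree := natDegree_pos_iff_degree_pos.2 hq0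
  have hle : ∀ i, qCoeff q (q + c) i ≠ 0 →
      min (ν c) (ν q) ≤ ν (qCoeff q (q + c) i * q ^ i) := by
    rintro (_ | _ | i) hi
    · rw [h0, pow_zero, mul_one]; exact min_le_left _ _
    · rw [h1, pow_one, one_mul]; exact min_le_right _ _
    · refine absurd (qCoeff_eq_zero_of_degree_lt hq (degree_lt_degree ?_)) hi
      rw [hn, hq.natDegree_pow]
      nlinarith
  rcases min_choice (ν c) (ν q) with h | h
  · exact truncVal_eq_of_attained ν 0 (Nat.zero_le _) (by rwa [h0])
      (by rw [h0, pow_zero, mul_one, h]) hle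
  · exact truncVal_eq_of_attained ν 1 (hn ▸ hn0) (by rw [h1]; exact one_ne_zero)
      (by rw [h1, pow_one, one_mul, h]) hle

end Truncation

/-- The truncation `ν_q` need not be a valuation: if `ν(x) = ν(a) = 1` and
`q = x² + 1`, then `ν_q(x² - a²) = 0` while `ν_q(x - a) + ν_q(x + a) ≥ 2`, so
`ν_q((x - a)(x + a)) ≠ ν_q(x - a) + ν_q(x + a)`. -/
theorem trunc_not_valuation (ν : Polynomial K → Γ) (hν : IsVal ν)
    (a : K) (ha0 : a ≠ 0) (hx : ν X = 1) (ha : ν (C a) = 1) :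
    truncVal ν (X ^ 2 + 1) (X ^ 2 - C (a ^ 2)) = 0 ∧
    (2 : Γ) ≤ truncVal ν (X ^ 2 + 1) (X - C a) +
      truncVal ν (X ^ 2 + 1) (X + C a) ∧
    truncVal ν (X ^ 2 + 1) ((X - C a) * (X + C a)) ≠
      truncVal ν (X ^ 2 + 1) (X - C a) + truncVal ν (X ^ 2 + 1) (X + C a) := by
  set q : K[X] := X ^ 2 + 1 with hq_def
  have hq : q.Monic := monic_X_pow_add (by rw [degree_one]; norm_num)
  have hqdeg : q.degree = 2 := by rw [hq_def, ← C_1]; exact degree_X_pow_add_C two_pos 1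
  have hCa : C a ≠ 0 := C_ne_zero.2 ha0
  have hνq : ν q = 0 := by
    rw [hq_def, add_comm]
    exact hν.map_one_add_of_pos (pow_ne_zero 2 X_ne_zero) (by rw [hν.map_pow X_ne_zero, hx]; norm_num)
  have hνa2 : 0 < ν (C a ^ 2) := by rw [hν.map_pow hCa, ha]; norm_num
  have hc0 : 1 + C a ^ 2 ≠ 0 :=
    hν.add_ne_zero_of_ne one_ne_zero (by rw [hν.map_one]; exact hνa2.ne)
  have hνc : ν (-(1 + C a ^ 2)) = 0 := by
    rw [hν.map_neg hc0, hν.map_one_add_of_pos (pow_ne_zero 2 hCa) hνa2]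
  have hcdeg : (-(1 + C a ^ 2)).degree < q.degree := by
    rw [degree_neg, ← C_pow, ← C_1, ← C_add, hqdeg]
    exact degree_C_le.trans_lt (by norm_num)
  have hdiff : truncVal ν q (X ^ 2 - C (a ^ 2)) = 0 := by
    rw [show X ^ 2 - C (a ^ 2) = q + -(1 + C a ^ 2) by rw [C_pow]; ring,
      truncVal_add_of_degree_lt ν hq (by rw [hqdeg]; norm_num) (neg_ne_zero.2 hc0) hcdeg,
      hνc, hνq, min_self]
  have hlin (p : K[X]) (hp : p.degree = 1) : truncVal ν q p = ν p :=
    truncVal_of_degree_lt ν hq (ne_zero_of_degree_gt (hp ▸ zero_lt_one))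
      (by rw [hp, hqdeg]; norm_num)
  have hsub : 1 ≤ truncVal ν q (X - C a) := by
    rw [hlin _ (degree_X_sub_C a)]
    simpa [hx, ha] using hν.min_le_map_sub X_ne_zero hCa (X_sub_C_ne_zero a)
  have hadd : 1 ≤ truncVal ν q (X + C a) := by
    rw [hlin _ (degree_X_add_C a)]
    simpa [hx, ha] using hν.map_add X (C a) X_ne_zero hCa (X_add_C_ne_zero a)
  refine ⟨hdiff, by linarith, ?_⟩
  rw [show (X - C a) * (X + C a) = X ^ 2 - C (a ^ 2) by rw [C_pow]; ring, hdiff]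
  exact (show (0 : Γ) < _ by linarith).ne
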